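/- arXiv:1708.07953 — 4 statements merged into one kernel-verified Lean document; each statement's English description precedes it below -/
import Mathlib

section
/- Let (T_t)_{t≥0} be a strongly continuous semigroup of bounded linear operators on a Banach space X. If there exists β ∈ KL such that ‖T_t x‖_X ≤ β(‖x‖_X, t) for all x ∈ X and all t ≥ 0, then the semigroup is exponentially stable: there exist M, λ > 0 such that ‖T_t‖ ≤ M e^{−λt} for all t ≥ 0, where ‖T_t‖ denotes the operator norm. -/
open Set Filter Topology MeasureTheory

section Defs

variable {X : Type*} [NormedAddCommGroup X] [NormedSpace ℝ X] [CompleteSpace X]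
variable {U : Type*} [NormedAddCommGroup U] [NormedSpace ℝ U]

/-- Class `K` functions: continuous, strictly increasing on `[0,∞)` and vanishing at `0`. -/
def ClassK (γ : ℝ → ℝ) : Prop :=
  ContinuousOn γ (Ici 0) ∧ StrictMonoOn γ (Ici 0) ∧ γ 0 = 0

/-- Class `K∞` functions: class `K` and unbounded. -/
def ClassKinf (γ : ℝ → ℝ) : Prop :=
  ClassK γ ∧ ∀ M : ℝ, ∃ r : ℝ, 0 ≤ r ∧ M < γ r

/-- Class `KL` functions. -/
def ClassKL (β : ℝ → ℝ → ℝ) : Prop :=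
  ContinuousOn (fun p : ℝ × ℝ => β p.1 p.2) (Ici 0 ×ˢ Ici 0) ∧
  (∀ t : ℝ, 0 ≤ t → ClassK (fun r => β r t)) ∧
  (∀ r : ℝ, 0 < r →
    StrictAntiOn (fun t => β r t) (Ici 0) ∧ Tendsto (fun t => β r t) atTop (nhds 0))

/-- Continuous positive definite functions on `[0,∞)`. -/
def ClassPD (α : ℝ → ℝ) : Prop :=
  ContinuousOn α (Ici 0) ∧ α 0 = 0 ∧ ∀ r : ℝ, 0 < r → 0 < α r

/-- A strongly continuous semigroup of bounded linear operators on `X`,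
parametrized by `t : ℝ` (only the values for `t ≥ 0` matter). -/
def IsC0Semigroup (T : ℝ → X →L[ℝ] X) : Prop :=
  T 0 = 1 ∧ (∀ s : ℝ, 0 ≤ s → ∀ t : ℝ, 0 ≤ t → T (s + t) = (T s).comp (T t)) ∧
  ∀ x : X, ContinuousOn (fun t => T t x) (Ici 0)

/-- Piecewise continuous functions: on each compact interval, continuous up to
finitely many exceptional points. -/
def PiecewiseContinuous (u : ℝ → U) : Prop :=
  ∀ a b : ℝ, ∃ S : Finset ℝ, ∀ t ∈ Icc a b, t ∉ S → ContinuousAt u t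

/-- Admissible inputs: globally bounded (on `[0,∞)`) piecewise continuous functions. -/
def AdmissibleInput (u : ℝ → U) : Prop :=
  PiecewiseContinuous u ∧ ∃ C : ℝ, ∀ t : ℝ, 0 ≤ t → ‖u t‖ ≤ C

/-- Admissible disturbances: piecewise continuous functions with values in the
closed unit ball of `U`. -/
def AdmissibleDisturbance (d : ℝ → U) : Prop :=
  PiecewiseContinuous d ∧ ∀ t : ℝ, 0 ≤ t → ‖d t‖ ≤ 1

/-- The sup-norm of an input over `[0,∞)`. -/
noncomputable def supNorm (u : ℝ → U) : ℝ := ⨆ t : Ici (0:ℝ), ‖u ↑t‖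

/-- Mild solutions of `ẋ = Ax + f(x,u)`:
`φ(t) = T_t x₀ + ∫_0^t T_{t-s} f(φ(s), u(s)) ds`, continuous on `[0,∞)`. -/
def IsMildSolution (T : ℝ → X →L[ℝ] X) (f : X → U → X) (x₀ : X) (u : ℝ → U)
    (φ : ℝ → X) : Prop :=
  φ 0 = x₀ ∧ ContinuousOn φ (Ici 0) ∧
  ∀ t : ℝ, 0 ≤ t → φ t = T t x₀ + ∫ s in (0:ℝ)..t, T (t - s) (f (φ s) (u s))

/-- `f : X × U → X` is bi-Lipschitz continuous on bounded sets. -/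
def BiLipschitzOnBounded (f : X → U → X) : Prop :=
  (∀ C : ℝ, 0 < C → ∃ L : ℝ, 0 < L ∧ ∀ x y : X, ‖x‖ ≤ C → ‖y‖ ≤ C → ∀ v : U,
      ‖f x v - f y v‖ ≤ L * ‖x - y‖) ∧
  (∀ C : ℝ, 0 < C → ∃ L : ℝ, 0 < L ∧ ∀ u v : U, ‖u‖ ≤ C → ‖v‖ ≤ C → ∀ x : X,
      ‖f x u - f x v‖ ≤ L * ‖u - v‖)

/-- Lipschitz continuity on bounded balls. -/
def LipschitzOnBoundedBalls {Y : Type*} [NormedAddCommGroup Y] (V : X → Y) : Prop :=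
  ∀ r : ℝ, 0 < r → ∃ L : ℝ, 0 < L ∧ ∀ x y : X, ‖x‖ ≤ r → ‖y‖ ≤ r →
    ‖V x - V y‖ ≤ L * ‖x - y‖

/-- The (upper right) Dini derivative of `V` along a trajectory `ψ`, at the point `x`. -/
noncomputable def DiniDerivAlong (V : X → ℝ) (ψ : ℝ → X) (x : X) : EReal :=
  Filter.limsup (fun t : ℝ => (((V (ψ t) - V x) / t : ℝ) : EReal)) (nhdsWithin 0 (Ioi 0))

/-- Input-to-state stability of `ẋ = Ax + f(x,u)`: forward completeness plus
a `KL`/`K` estimate on all mild solutions. -/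
def ISSProp (T : ℝ → X →L[ℝ] X) (f : X → U → X) : Prop :=
  (∀ (x : X) (u : ℝ → U), AdmissibleInput u → ∃ ψs : ℝ → X, IsMildSolution T f x u ψs) ∧
  ∃ (β : ℝ → ℝ → ℝ) (γ : ℝ → ℝ), ClassKL β ∧ ClassK γ ∧
    ∀ (x : X) (u : ℝ → U) (ψs : ℝ → X), AdmissibleInput u → IsMildSolution T f x u ψs →
      ∀ t : ℝ, 0 ≤ t → ‖ψs t‖ ≤ β ‖x‖ t + γ (supNorm u)

/-- Weak uniform robust asymptotic stability of `ẋ = Ax + f(x,u)`: there is a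
feedback `φfb ≥ ψ(‖·‖)`, Lipschitz on bounded balls, such that the closed-loop
system `ẋ = Ax + f(x, d(t)·φfb(x))` is forward complete and UGAS, uniformly over
all piecewise continuous disturbances with values in the unit ball. -/
def WURSProp (T : ℝ → X →L[ℝ] X) (f : X → U → X) : Prop :=
  ∃ (φfb : X → ℝ) (ψ : ℝ → ℝ) (β : ℝ → ℝ → ℝ),
    (∀ x : X, 0 ≤ φfb x) ∧ LipschitzOnBoundedBalls φfb ∧ ClassKinf ψ ∧
    (∀ x : X, ψ ‖x‖ ≤ φfb x) ∧ ClassKL β ∧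
    ∀ (x : X) (d : ℝ → U), AdmissibleDisturbance d →
      (∃ ψs : ℝ → X, IsMildSolution T (fun z v => f z (φfb z • v)) x d ψs) ∧
      ∀ ψs : ℝ → X, IsMildSolution T (fun z v => f z (φfb z • v)) x d ψs →
        ∀ t : ℝ, 0 ≤ t → ‖ψs t‖ ≤ β ‖x‖ t

/-- Existence of a coercive ISS Lyapunov function (in implication form) which is
Lipschitz continuous on bounded balls. -/
def CoerciveISSLF (T : ℝ → X →L[ℝ] X) (f : X → U → X) : Prop :=
  ∃ (V : X → ℝ) (ψ₁ ψ₂ χ α : ℝ → ℝ),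
    LipschitzOnBoundedBalls V ∧ ClassKinf ψ₁ ∧ ClassKinf ψ₂ ∧ ClassK χ ∧ ClassPD α ∧
    (∀ x : X, ψ₁ ‖x‖ ≤ V x ∧ V x ≤ ψ₂ ‖x‖) ∧
    ∀ (x : X) (u : ℝ → U), AdmissibleInput u → χ ‖u 0‖ ≤ ‖x‖ →
      ∀ ψs : ℝ → X, IsMildSolution T f x u ψs →
        DiniDerivAlong V ψs x ≤ ((-α ‖x‖ : ℝ) : EReal)

end Defs

/-- If a strongly continuous semigroup admits a `KL` estimate
`‖T_t x‖ ≤ β(‖x‖, t)`, then it is exponentially stable. -/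
theorem kl_estimate_implies_exponential_stability
    {X : Type*} [NormedAddCommGroup X] [NormedSpace ℝ X] [CompleteSpace X]
    (T : ℝ → X →L[ℝ] X) (hT : IsC0Semigroup T)
    (β : ℝ → ℝ → ℝ) (hβ : ClassKL β)
    (hbound : ∀ (x : X) (t : ℝ), 0 ≤ t → ‖T t x‖ ≤ β ‖x‖ t) :
    ∃ M lam : ℝ, 0 < M ∧ 0 < lam ∧ ∀ t : ℝ, 0 ≤ t → ‖T t‖ ≤ M * Real.exp (-lam * t) := by
  -- nonnegativity of β 1 t
  have h0le : ∀ t : ℝ, 0 ≤ t → 0 ≤ β 1 t := by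
    intro t ht
    have hK := hβ.2.1 t ht
    have := hK.2.1 (self_mem_Ici) (by norm_num : (1:ℝ) ∈ Ici 0) zero_lt_one
    simpa [hK.2.2] using this.le
  -- operator norm bound
  have hop : ∀ t : ℝ, 0 ≤ t → ‖T t‖ ≤ β 1 t := by
    intro t ht
    refine ContinuousLinearMap.opNorm_le_bound _ (h0le t ht) ?_
    intro x
    by_cases hx : x = 0
    · simp [hx]
    · have hxn : (0:ℝ) < ‖x‖ := norm_pos_iff.mpr hx
      have hy : ‖(‖x‖⁻¹ • x)‖ = 1 := by
        rw [norm_smul, norm_inv, norm_norm]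
        field_simp
      have h1 : ‖T t (‖x‖⁻¹ • x)‖ ≤ β 1 t := by
        have := hbound (‖x‖⁻¹ • x) t ht
        rwa [hy] at this
      have h2 : ‖T t x‖ = ‖x‖ * ‖T t (‖x‖⁻¹ • x)‖ := by
        rw [(T t).map_smul, norm_smul, norm_inv, norm_norm]
        field_simp
      rw [h2, mul_comm]
      exact mul_le_mul_of_nonneg_right h1 hxn.le
  -- choose t₀ with β 1 t₀ ≤ 1/2 and t₀ ≥ 1
  obtain ⟨hanti, htend⟩ := hβ.2.2 1 one_pos
  have hev : ∀ᶠ t in atTop, β 1 t < 1/2 :=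
    htend.eventually (gt_mem_nhds (by norm_num : (0:ℝ) < 1/2))
  obtain ⟨a, ha⟩ := eventually_atTop.mp hev
  set t₀ : ℝ := max a 1 with ht₀def
  have ht₀pos : 0 < t₀ := lt_of_lt_of_le one_pos (le_max_right a 1)
  have ht₀half : β 1 t₀ ≤ 1/2 := (ha t₀ (le_max_left a 1)).le
  -- uniform bound C' on [0, t₀]
  set C' : ℝ := β 1 0 + 1 with hC'def
  have hC'pos : 0 < C' := by
    have := h0le 0 le_rfl; positivity
  have hbdd : ∀ r : ℝ, 0 ≤ r → r ≤ t₀ → ‖T r‖ ≤ C' := by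
    intro r hr hrt
    have h1 : β 1 r ≤ β 1 0 := hanti.antitoneOn self_mem_Ici hr hr
    linarith [hop r hr]
  have hhalf : ‖T t₀‖ ≤ 1/2 := le_trans (hop t₀ ht₀pos.le) ht₀half
  -- inductive estimate
  have key : ∀ n : ℕ, ∀ r : ℝ, 0 ≤ r → r ≤ t₀ → ‖T ((n : ℝ) * t₀ + r)‖ ≤ (1/2)^n * C' := by
    intro n
    induction n with
    | zero => intro r hr hrt; simpa using hbdd r hr hrt
    | succ n ih =>
      intro r hr hrt
      have heq : ((n + 1 : ℕ) : ℝ) * t₀ + r = t₀ + ((n : ℝ) * t₀ + r) := by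
        push_cast; ring
      have hnr : 0 ≤ (n : ℝ) * t₀ + r := by positivity
      rw [heq, hT.2.1 t₀ ht₀pos.le _ hnr]
      calc ‖(T t₀).comp (T ((n:ℝ) * t₀ + r))‖
          ≤ ‖T t₀‖ * ‖T ((n:ℝ) * t₀ + r)‖ := ContinuousLinearMap.opNorm_comp_le _ _
        _ ≤ (1/2) * ((1/2)^n * C') := by
            apply mul_le_mul hhalf (ih r hr hrt) (norm_nonneg _)
            norm_num
        _ = (1/2)^(n+1) * C' := by ring
  -- assemble
  refine ⟨2 * C', Real.log 2 / t₀, by positivity,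
    div_pos (Real.log_pos one_lt_two) ht₀pos, ?_⟩
  intro t ht
  set n : ℕ := ⌊t / t₀⌋₊ with hndef
  have hdiv : 0 ≤ t / t₀ := div_nonneg ht ht₀pos.le
  have hn1 : (n : ℝ) ≤ t / t₀ := Nat.floor_le hdiv
  have hn2 : t / t₀ < n + 1 := Nat.lt_floor_add_one _
  have hr1 : (n : ℝ) * t₀ ≤ t := by
    have h := mul_le_mul_of_nonneg_right hn1 ht₀pos.le
    rwa [div_mul_cancel₀ _ ht₀pos.ne'] at h
  have hr2 : t ≤ (n : ℝ) * t₀ + t₀ := by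
    have : t < ((n : ℝ) + 1) * t₀ := by
      rw [← div_lt_iff₀ ht₀pos]; exact hn2
    nlinarith
  have hTt : ‖T t‖ ≤ (1/2)^n * C' := by
    have h := key n (t - (n : ℝ) * t₀) (by linarith) (by linarith)
    have heq : (n : ℝ) * t₀ + (t - (n : ℝ) * t₀) = t := by ring
    rwa [heq] at h
  have hexp : ((1:ℝ)/2)^n ≤ 2 * Real.exp (-(Real.log 2 / t₀) * t) := by
    have hln : 0 < Real.log 2 := Real.log_pos one_lt_two
    have e1 : ((1:ℝ)/2)^n = Real.exp ((n:ℝ) * (-Real.log 2)) := by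
      rw [Real.exp_nat_mul, Real.exp_neg, Real.exp_log two_pos, one_div]
    have e2 : 2 * Real.exp (-(Real.log 2 / t₀) * t)
        = Real.exp (Real.log 2 + -(Real.log 2 / t₀) * t) := by
      rw [Real.exp_add, Real.exp_log two_pos]
    rw [e1, e2]
    apply Real.exp_le_exp.mpr
    have h5 : (Real.log 2 / t₀) * t ≤ ((n:ℝ)+1) * Real.log 2 := by
      rw [div_mul_eq_mul_div, div_le_iff₀ ht₀pos]
      nlinarith
    linarith
  calc ‖T t‖ ≤ (1/2)^n * C' := hTt
    _ ≤ (2 * Real.exp (-(Real.log 2 / t₀) * t)) * C' :=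
        mul_le_mul_of_nonneg_right hexp hC'pos.le
    _ = 2 * C' * Real.exp (-(Real.log 2 / t₀) * t) := by ring
end

section
/- Let (T_t)_{t≥0} be a strongly continuous semigroup on a Banach space X with ‖T_t‖ ≤ M e^{−λt} for all t ≥ 0 (M, λ > 0), let B : U → X be a bounded linear operator, and define V(x) := ∫_0^∞ ‖T_t x‖_X² dt. Then for every x ∈ X, every globally bounded, piecewise continuous input u : [0,∞) → U that is right-continuous at 0, and every ε > 0, the Dini derivative of V along the mild solution φ(t,x,u) = T_t x + ∫_0^t T_{t−s} B u(s) ds satisfies V̇_u(x) := limsup_{h→0+} (V(φ(h,x,u)) − V(x))/h ≤ −‖x‖_X² + (ε M²/(2λ)) ‖x‖_X² + (M²/(2λε)) ‖B‖² ‖u(0)‖_U². -/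
open Set Filter Topology MeasureTheory

/-!
Write `φ(h) = T_h x + w(h)` with `w(h) = ∫_0^h T_{h-s} B u(s) ds`. The semigroup law gives
`V(T_h x) = V(x) - ∫_0^h ‖T_t x‖² dt`, and the exponential bound gives
`V(a + z) - V(a) ≤ M²/(2λ) (2‖a‖ + ‖z‖) ‖z‖`. After dividing by `h`, the average
`h⁻¹ ∫_0^h ‖T_t x‖² dt` tends to `‖x‖²`, and `w(h)/h → B u(0)` by strong continuity of `T` and
right continuity of `u` at `0`.
Hence the Dini derivative is at most `-‖x‖² + (M²/λ) ‖x‖ ‖B u(0)‖`, and Young's inequality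
`2ab ≤ εa² + b²/ε` finishes.
-/

section

variable {E : Type*} [NormedAddCommGroup E]

theorem tendsto_clm_apply_of_eventually_norm_le [NormedSpace ℝ E] {F β : Type*}
    [NormedAddCommGroup F] [NormedSpace ℝ F] {l : Filter β}
    {A : β → E →L[ℝ] F} {y : β → E} {y₀ : E} {a : F} {K : ℝ}
    (hA : ∀ᶠ b in l, ‖A b‖ ≤ K) (hAy₀ : Tendsto (fun b => A b y₀) l (𝓝 a))
    (hy : Tendsto y l (𝓝 y₀)) :
    Tendsto (fun b => A b (y b)) l (𝓝 a) := by
  have hsmall : Tendsto (fun b => A b (y b - y₀)) l (𝓝 0) := by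
    refine squeeze_zero_norm' ?_ (by simpa using ((hy.sub_const y₀).norm.const_mul K))
    filter_upwards [hA] with b hb using (A b).le_of_opNorm_le hb _
  simpa using hAy₀.add hsmall

theorem setIntegral_Ioi_comp_add_right [NormedSpace ℝ E] (f : ℝ → E) (a h : ℝ) :
    ∫ t in Ioi a, f (t + h) = ∫ t in Ioi (a + h), f t := by
  have hpre : (fun t => t + h) ⁻¹' Ioi (a + h) = Ioi a := by ext t; simp
  rw [← hpre]
  exact (measurePreserving_add_right volume h).setIntegral_preimage_emb
    (measurableEmbedding_addRight h) f _

theorem intervalIntegrable_of_continuousOn_diff_finset {f : ℝ → E} {a b C : ℝ} (hab : a ≤ b)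
    (S : Finset ℝ) (hf : ContinuousOn f (Ioc a b \ S)) (hC : ∀ s ∈ Ioc a b, ‖f s‖ ≤ C) :
    IntervalIntegrable f volume a b := by
  rw [intervalIntegrable_iff_integrableOn_Ioc_of_le hab]
  have hae : Ioc a b \ (S : Set ℝ) =ᵐ[volume] Ioc a b :=
    sdiff_ae_eq_self.2 (measure_mono_null inter_subset_right (S.finite_toSet.measure_zero _))
  have hmeas : AEStronglyMeasurable f (volume.restrict (Ioc a b)) := by
    rw [← Measure.restrict_congr_set hae]
    exact hf.aestronglyMeasurable (measurableSet_Ioc.diff S.finite_toSet.measurableSet)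
  refine Integrable.mono' (integrableOn_const measure_Ioc_lt_top.ne (C := C)) hmeas ?_
  filter_upwards [ae_restrict_mem measurableSet_Ioc] with s hs using hC s hs

theorem tendsto_zero_of_tendsto_inv_smul [NormedSpace ℝ E] {f : ℝ → E} {c : E}
    (hf : Tendsto (fun h => h⁻¹ • f h) (𝓝[>] 0) (𝓝 c)) : Tendsto f (𝓝[>] 0) (𝓝 0) := by
  have hsmul := (tendsto_nhdsWithin_of_tendsto_nhds tendsto_id).smul hf
  rw [zero_smul] at hsmul
  refine hsmul.congr' ?_
  filter_upwards [self_mem_nhdsWithin] with h (hh : 0 < h)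
  rw [id, smul_inv_smul₀ hh.ne']

variable [NormedSpace ℝ E] [CompleteSpace E]

theorem norm_inv_smul_integral_sub_le {f : ℝ → E} {c : E} {h η : ℝ} (hh : 0 < h)
    (hf : IntervalIntegrable f volume 0 h) (hfc : ∀ s ∈ Ioc 0 h, ‖f s - c‖ ≤ η) :
    ‖h⁻¹ • (∫ s in 0..h, f s) - c‖ ≤ η := by
  have hmean : h⁻¹ • (∫ s in 0..h, f s) - c = h⁻¹ • ∫ s in 0..h, (f s - c) := by
    rw [intervalIntegral.integral_sub hf intervalIntegrable_const,
      intervalIntegral.integral_const, sub_zero, smul_sub, smul_smul,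
      inv_mul_cancel₀ hh.ne', one_smul]
  have hbound : ‖∫ s in 0..h, (f s - c)‖ ≤ η * |h - 0| :=
    intervalIntegral.norm_integral_le_of_norm_le_const (by rwa [uIoc_of_le hh.le])
  rw [hmean, norm_smul, norm_inv, Real.norm_of_nonneg hh.le, sub_zero, abs_of_pos hh] at *
  calc h⁻¹ * ‖∫ s in 0..h, (f s - c)‖ ≤ h⁻¹ * (η * h) := by gcongr
    _ = η := by field_simp

theorem tendsto_inv_smul_integral_of_continuousWithinAt {g : ℝ × ℝ → E}
    (hg : ContinuousWithinAt g (Ici 0 ×ˢ Ici 0) 0)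
    (hint : ∀ᶠ h in 𝓝[>] 0, IntervalIntegrable (fun s => g (h - s, s)) volume 0 h) :
    Tendsto (fun h => h⁻¹ • ∫ s in 0..h, g (h - s, s)) (𝓝[>] 0) (𝓝 (g 0)) := by
  rw [Metric.tendsto_nhds]
  intro ε hε
  obtain ⟨δ, hδ, hgδ⟩ := Metric.continuousWithinAt_iff.1 hg (ε / 2) (half_pos hε)
  filter_upwards [hint, Ioo_mem_nhdsGT hδ] with h hint ⟨h0, hhδ⟩
  refine lt_of_le_of_lt ?_ (half_lt_self hε)
  rw [dist_eq_norm]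
  refine norm_inv_smul_integral_sub_le h0 hint fun s ⟨hs0, hsh⟩ => ?_
  have hmem : (h - s, s) ∈ Ici (0 : ℝ) ×ˢ Ici (0 : ℝ) := ⟨sub_nonneg.2 hsh, hs0.le⟩
  have hdist : dist (h - s, s) 0 < δ := by
    rw [Prod.dist_eq, max_lt_iff]
    constructor <;> simp only [Prod.fst_zero, Prod.snd_zero, Real.dist_eq, sub_zero] <;>
      rw [abs_lt] <;> constructor <;> linarith
  simpa [dist_eq_norm] using (hgδ hmem hdist).le

theorem tendsto_inv_smul_integral_of_continuousOn {f : ℝ → E} (hf : ContinuousOn f (Ici 0)) :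
    Tendsto (fun h => h⁻¹ • ∫ s in 0..h, f s) (𝓝[>] 0) (𝓝 (f 0)) := by
  have hg : ContinuousWithinAt (fun p : ℝ × ℝ => f p.2) (Ici 0 ×ˢ Ici 0) 0 :=
    (hf 0 self_mem_Ici).comp (x := (0 : ℝ × ℝ)) continuousWithinAt_snd
      fun p (hp : p ∈ Ici 0 ×ˢ Ici 0) => hp.2
  refine tendsto_inv_smul_integral_of_continuousWithinAt hg
    (eventually_nhdsWithin_of_forall fun h (hh : 0 < h) => ?_)
  exact (hf.mono (by simp [uIcc_of_le hh.le, Icc_subset_Ici_self])).intervalIntegrable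

end

section DecayingSemigroup

variable {X : Type*} [NormedAddCommGroup X] [NormedSpace ℝ X]
  {T : ℝ → X →L[ℝ] X} {M lam : ℝ}

noncomputable def lyapunovIntegral (T : ℝ → X →L[ℝ] X) (z : X) : ℝ :=
  ∫ t in Ioi 0, ‖T t z‖ ^ 2

theorem norm_le_of_exp_decay (hT : ∀ t : ℝ, 0 ≤ t → ‖T t‖ ≤ M * Real.exp (-lam * t))
    (hlam : 0 ≤ lam) {t : ℝ} (ht : 0 ≤ t) : ‖T t‖ ≤ M := by
  have hM : 0 ≤ M := by simpa using (norm_nonneg _).trans (hT 0 le_rfl)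
  refine (hT t ht).trans (mul_le_of_le_one_right hM ?_)
  exact Real.exp_le_one_iff.2 (by nlinarith)

theorem sq_norm_apply_le_of_exp_decay (hT : ∀ t : ℝ, 0 ≤ t → ‖T t‖ ≤ M * Real.exp (-lam * t))
    {t : ℝ} (ht : 0 ≤ t) (z : X) :
    ‖T t z‖ ^ 2 ≤ ‖z‖ ^ 2 * (M ^ 2 * Real.exp (-(2 * lam) * t)) := by
  have hexp : Real.exp (-(2 * lam) * t) = Real.exp (-lam * t) ^ 2 := by
    rw [sq, ← Real.exp_add]; ring_nf
  rw [hexp]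
  calc ‖T t z‖ ^ 2 ≤ (M * Real.exp (-lam * t) * ‖z‖) ^ 2 :=
        pow_le_pow_left₀ (norm_nonneg _) ((T t).le_of_opNorm_le (hT t ht) z) 2
    _ = _ := by ring

theorem sq_norm_apply_add_le_of_exp_decay
    (hT : ∀ t : ℝ, 0 ≤ t → ‖T t‖ ≤ M * Real.exp (-lam * t)) {t : ℝ} (ht : 0 ≤ t) (a z : X) :
    ‖T t (a + z)‖ ^ 2
      ≤ ‖T t a‖ ^ 2 + (2 * ‖a‖ + ‖z‖) * ‖z‖ * (M ^ 2 * Real.exp (-(2 * lam) * t)) := by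
  have hTa := (T t).le_of_opNorm_le (hT t ht) a
  have hTz := (T t).le_of_opNorm_le (hT t ht) z
  have hTaz : ‖T t (a + z)‖ ≤ ‖T t a‖ + ‖T t z‖ := by rw [map_add]; exact norm_add_le _ _
  have hexp : Real.exp (-(2 * lam) * t) = Real.exp (-lam * t) ^ 2 := by
    rw [sq, ← Real.exp_add]; ring_nf
  rw [hexp]
  nlinarith [norm_nonneg (T t a), norm_nonneg (T t z), norm_nonneg (T t (a + z)),
    mul_le_mul hTa hTz (norm_nonneg _) ((norm_nonneg _).trans hTa)]

theorem integrableOn_sq_norm_apply_of_exp_decay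
    (hT : ∀ t : ℝ, 0 ≤ t → ‖T t‖ ≤ M * Real.exp (-lam * t)) (hlam : 0 < lam) {z : X}
    (hz : ContinuousOn (fun t => T t z) (Ici 0)) :
    IntegrableOn (fun t => ‖T t z‖ ^ 2) (Ioi 0) := by
  refine Integrable.mono' (((exp_neg_integrableOn_Ioi 0 (by positivity : 0 < 2 * lam)).const_mul
    (M ^ 2)).const_mul (‖z‖ ^ 2))
    (((hz.mono Ioi_subset_Ici_self).norm.pow 2).aestronglyMeasurable measurableSet_Ioi) ?_
  filter_upwards [ae_restrict_mem measurableSet_Ioi] with t ht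
  rw [Real.norm_of_nonneg (by positivity)]
  exact sq_norm_apply_le_of_exp_decay hT (le_of_lt ht) z

theorem lyapunovIntegral_add_sub_le_of_exp_decay
    (hT : ∀ t : ℝ, 0 ≤ t → ‖T t‖ ≤ M * Real.exp (-lam * t)) (hlam : 0 < lam)
    (hcont : ∀ z : X, ContinuousOn (fun t => T t z) (Ici 0)) (a z : X) :
    lyapunovIntegral T (a + z) - lyapunovIntegral T a
      ≤ M ^ 2 / (2 * lam) * ((2 * ‖a‖ + ‖z‖) * ‖z‖) := by
  have hexp : IntegrableOn (fun t => (2 * ‖a‖ + ‖z‖) * ‖z‖ * (M ^ 2 * Real.exp (-(2 * lam) * t)))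
      (Ioi 0) :=
    ((exp_neg_integrableOn_Ioi 0 (by positivity : 0 < 2 * lam)).const_mul _).const_mul _
  have hexp_val : ∫ t in Ioi 0, (2 * ‖a‖ + ‖z‖) * ‖z‖ * (M ^ 2 * Real.exp (-(2 * lam) * t))
      = M ^ 2 / (2 * lam) * ((2 * ‖a‖ + ‖z‖) * ‖z‖) := by
    rw [integral_const_mul, integral_const_mul, integral_exp_mul_Ioi (by linarith)]
    field_simp
    simp
  have hmono := setIntegral_mono_on
    (integrableOn_sq_norm_apply_of_exp_decay hT hlam (hcont (a + z)))
    ((integrableOn_sq_norm_apply_of_exp_decay hT hlam (hcont a)).add hexp) measurableSet_Ioi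
    fun t ht => sq_norm_apply_add_le_of_exp_decay hT (le_of_lt ht) a z
  simp only [Pi.add_apply] at hmono
  rw [integral_add (integrableOn_sq_norm_apply_of_exp_decay hT hlam (hcont a)) hexp,
    hexp_val] at hmono
  rw [lyapunovIntegral, lyapunovIntegral]
  linarith

theorem lyapunovIntegral_apply_semigroup
    (hsem : ∀ s : ℝ, 0 ≤ s → ∀ t : ℝ, 0 ≤ t → T (s + t) = (T s).comp (T t)) {x : X}
    (hx : IntegrableOn (fun t => ‖T t x‖ ^ 2) (Ioi 0)) {h : ℝ} (hh : 0 ≤ h) :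
    lyapunovIntegral T (T h x) = lyapunovIntegral T x - ∫ t in 0..h, ‖T t x‖ ^ 2 := by
  have hcomp : lyapunovIntegral T (T h x) = ∫ t in Ioi 0, ‖T (t + h) x‖ ^ 2 :=
    setIntegral_congr_fun measurableSet_Ioi fun t ht => by
      rw [hsem t (le_of_lt ht) h hh, ContinuousLinearMap.comp_apply]
  rw [hcomp, setIntegral_Ioi_comp_add_right (fun t => ‖T t x‖ ^ 2), zero_add, lyapunovIntegral,
    ← intervalIntegral.integral_Ioi_sub_Ioi hx hh, sub_sub_cancel]

theorem lyapunovIntegral_sub_div_le_of_exp_decay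
    (hT : ∀ t : ℝ, 0 ≤ t → ‖T t‖ ≤ M * Real.exp (-lam * t)) (hlam : 0 < lam)
    (hsem : ∀ s : ℝ, 0 ≤ s → ∀ t : ℝ, 0 ≤ t → T (s + t) = (T s).comp (T t))
    (hcont : ∀ z : X, ContinuousOn (fun t => T t z) (Ici 0)) (x z : X) {h : ℝ} (hh : 0 < h) :
    (lyapunovIntegral T (T h x + z) - lyapunovIntegral T x) / h
      ≤ M ^ 2 / (2 * lam) * ((2 * ‖T h x‖ + ‖z‖) * ‖h⁻¹ • z‖)
        - h⁻¹ * ∫ t in 0..h, ‖T t x‖ ^ 2 := by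
  have hshift := lyapunovIntegral_apply_semigroup hsem
    (integrableOn_sq_norm_apply_of_exp_decay hT hlam (hcont x)) hh.le
  have hincr := lyapunovIntegral_add_sub_le_of_exp_decay hT hlam hcont (T h x) z
  rw [norm_smul, norm_inv, Real.norm_of_nonneg hh.le, div_le_iff₀ hh]
  calc _ ≤ M ^ 2 / (2 * lam) * ((2 * ‖T h x‖ + ‖z‖) * ‖z‖) - ∫ t in 0..h, ‖T t x‖ ^ 2 := by
        linarith
    _ = _ := by field_simp

end DecayingSemigroup

section MildInput

variable {X U : Type*} [NormedAddCommGroup X] [NormedSpace ℝ X]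
  [NormedAddCommGroup U] [NormedSpace ℝ U] {T : ℝ → X →L[ℝ] X} {K : ℝ}

theorem intervalIntegrable_semigroup_convolution (hK : ∀ t : ℝ, 0 ≤ t → ‖T t‖ ≤ K)
    (hcont : ∀ z : X, ContinuousOn (fun t => T t z) (Ici 0)) (B : U →L[ℝ] X) {u : ℝ → U}
    (hu : AdmissibleInput u) {h : ℝ} (hh : 0 ≤ h) :
    IntervalIntegrable (fun s => T (h - s) (B (u s))) volume 0 h := by
  obtain ⟨hpc, C, hC⟩ := hu
  obtain ⟨S, hS⟩ := hpc 0 h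
  refine intervalIntegrable_of_continuousOn_diff_finset hh S (C := K * (‖B‖ * C)) ?_ ?_
  · intro s ⟨⟨hs0, hsh⟩, hsS⟩
    have hmaps : MapsTo (fun s' => h - s') (Ioc 0 h \ S) (Ici 0) :=
      fun s' hs' => sub_nonneg.2 hs'.1.2
    refine tendsto_clm_apply_of_eventually_norm_le (y₀ := B (u s)) (K := K) ?_ ?_ ?_
    · filter_upwards [self_mem_nhdsWithin] with s' hs' using hK _ (hmaps hs')
    · exact (hcont _ _ (hmaps ⟨⟨hs0, hsh⟩, hsS⟩)).comp
        ((continuous_const.sub continuous_id).continuousWithinAt) hmaps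
    · exact (B.continuous.continuousAt.comp (hS s ⟨hs0.le, hsh⟩ hsS)).continuousWithinAt
  · intro s ⟨hs0, hsh⟩
    calc ‖T (h - s) (B (u s))‖ ≤ K * (‖B‖ * ‖u s‖) :=
          (T (h - s)).le_of_opNorm_le (hK _ (sub_nonneg.2 hsh)) _ |>.trans
            (mul_le_mul_of_nonneg_left (B.le_opNorm _) ((norm_nonneg _).trans (hK 0 le_rfl)))
      _ ≤ K * (‖B‖ * C) := by
          gcongr
          · exact (norm_nonneg _).trans (hK 0 le_rfl)
          · exact hC s hs0.le

theorem tendsto_inv_smul_semigroup_convolution [CompleteSpace X] (hT0 : T 0 = 1)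
    (hK : ∀ t : ℝ, 0 ≤ t → ‖T t‖ ≤ K) (hcont : ∀ z : X, ContinuousOn (fun t => T t z) (Ici 0))
    (B : U →L[ℝ] X) {u : ℝ → U} (hu : AdmissibleInput u)
    (hu0 : ContinuousWithinAt u (Ici 0) 0) :
    Tendsto (fun h => h⁻¹ • ∫ s in 0..h, T (h - s) (B (u s))) (𝓝[>] 0) (𝓝 (B (u 0))) := by
  have hquad : ContinuousWithinAt (fun p : ℝ × ℝ => T p.1 (B (u p.2))) (Ici 0 ×ˢ Ici 0) 0 := by
    refine tendsto_clm_apply_of_eventually_norm_le (y₀ := B (u 0)) (K := K) ?_ ?_ ?_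
    · filter_upwards [self_mem_nhdsWithin] with p hp using hK _ hp.1
    · exact (hcont (B (u 0)) 0 self_mem_Ici).comp (x := (0 : ℝ × ℝ)) continuousWithinAt_fst
        fun p (hp : p ∈ Ici 0 ×ˢ Ici 0) => hp.1
    · exact B.continuous.continuousAt.tendsto.comp (hu0.comp (x := (0 : ℝ × ℝ))
        continuousWithinAt_snd fun p (hp : p ∈ Ici 0 ×ˢ Ici 0) => hp.2)
  simpa [hT0] using tendsto_inv_smul_integral_of_continuousWithinAt hquad
    (eventually_nhdsWithin_of_forall fun h hh =>
      intervalIntegrable_semigroup_convolution hK hcont B hu (le_of_lt hh))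

end MildInput

theorem diniDerivAlong_le_of_eventually_le_of_tendsto {X : Type*} [NormedAddCommGroup X]
    [NormedSpace ℝ X] [CompleteSpace X] {V : X → ℝ} {ψ : ℝ → X} {x : X} {g : ℝ → ℝ} {L : ℝ}
    (hle : ∀ᶠ h in 𝓝[>] 0, (V (ψ h) - V x) / h ≤ g h) (hg : Tendsto g (𝓝[>] 0) (𝓝 L)) :
    DiniDerivAlong V ψ x ≤ L := by
  refine (limsup_le_limsup (hle.mono fun h hh => EReal.coe_le_coe_iff.2 hh)).trans_eq ?_
  exact ((continuous_coe_real_ereal.tendsto L).comp hg).limsup_eq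

theorem two_mul_mul_le_mul_sq_add_sq_div {a b ε : ℝ} (hε : 0 < ε) :
    2 * a * b ≤ ε * a ^ 2 + b ^ 2 / ε := by
  rw [← sub_nonneg]
  have hsq : 0 ≤ (ε * a - b) ^ 2 / ε := by positivity
  calc (0 : ℝ) ≤ (ε * a - b) ^ 2 / ε := hsq
    _ = _ := by field_simp; ring

theorem quadratic_lyapunov_function_dissipation_general
    {X : Type*} [NormedAddCommGroup X] [NormedSpace ℝ X] [CompleteSpace X]
    {U : Type*} [NormedAddCommGroup U] [NormedSpace ℝ U]
    (T : ℝ → X →L[ℝ] X) (hT : IsC0Semigroup T)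
    (M lam : ℝ) (hlam : 0 < lam)
    (hTdecay : ∀ t : ℝ, 0 ≤ t → ‖T t‖ ≤ M * Real.exp (-lam * t))
    (B : U →L[ℝ] X)
    (x : X) (u : ℝ → U) (hu : AdmissibleInput u)
    (hu0 : ContinuousWithinAt u (Ici 0) 0)
    (ε : ℝ) (hε : 0 < ε) :
    DiniDerivAlong (fun z : X => ∫ t in Ioi (0:ℝ), ‖T t z‖ ^ 2)
        (fun h : ℝ => T h x + ∫ s in (0:ℝ)..h, T (h - s) (B (u s))) x
      ≤ ((-‖x‖ ^ 2 + ε * M ^ 2 / (2 * lam) * ‖x‖ ^ 2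
            + M ^ 2 / (2 * lam * ε) * ‖B‖ ^ 2 * ‖u 0‖ ^ 2 : ℝ) : EReal) := by
  obtain ⟨hT0, hsem, hcont⟩ := hT
  set w := fun h : ℝ => ∫ s in (0:ℝ)..h, T (h - s) (B (u s))
  have hw : Tendsto (fun h => h⁻¹ • w h) (𝓝[>] 0) (𝓝 (B (u 0))) :=
    tendsto_inv_smul_semigroup_convolution hT0
      (fun t ht => norm_le_of_exp_decay hTdecay hlam.le ht) hcont B hu hu0
  have hw0 : Tendsto (fun h => ‖w h‖) (𝓝[>] 0) (𝓝 0) := by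
    simpa using (tendsto_zero_of_tendsto_inv_smul hw).norm
  have hTx : Tendsto (fun h => ‖T h x‖) (𝓝[>] 0) (𝓝 ‖x‖) := by
    simpa [hT0] using ((hcont x 0 self_mem_Ici).mono Ioi_subset_Ici_self).norm.tendsto
  have havg : Tendsto (fun h => h⁻¹ * ∫ t in 0..h, ‖T t x‖ ^ 2) (𝓝[>] 0) (𝓝 (‖x‖ ^ 2)) := by
    simpa [hT0] using tendsto_inv_smul_integral_of_continuousOn ((hcont x).norm.pow 2)
  have hmajorant := (tendsto_const_nhds (x := M ^ 2 / (2 * lam))).mul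
    (((hTx.const_mul 2).add hw0).mul hw.norm) |>.sub havg
  refine (diniDerivAlong_le_of_eventually_le_of_tendsto ?_ hmajorant).trans ?_
  · exact eventually_nhdsWithin_of_forall fun h (hh : 0 < h) =>
      lyapunovIntegral_sub_div_le_of_exp_decay hTdecay hlam hsem hcont x (w h) hh
  rw [EReal.coe_le_coe_iff]
  have hyoung := two_mul_mul_le_mul_sq_add_sq_div (a := ‖x‖) (b := ‖B‖ * ‖u 0‖) hε
  calc M ^ 2 / (2 * lam) * ((2 * ‖x‖ + 0) * ‖B (u 0)‖) - ‖x‖ ^ 2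
      ≤ M ^ 2 / (2 * lam) * (2 * ‖x‖ * (‖B‖ * ‖u 0‖)) - ‖x‖ ^ 2 := by
        rw [add_zero]; gcongr; exact B.le_opNorm _
    _ ≤ M ^ 2 / (2 * lam) * (ε * ‖x‖ ^ 2 + (‖B‖ * ‖u 0‖) ^ 2 / ε) - ‖x‖ ^ 2 := by
        gcongr
    _ = _ := by field_simp; ring

/-- Dissipation inequality for `V(x) = ∫_0^∞ ‖T_t x‖² dt` along mild
solutions of the linear system `ẋ = Ax + Bu`: for every `ε > 0`,
`V̇_u(x) ≤ −‖x‖² + (εM²/(2λ))‖x‖² + (M²/(2λε))‖B‖²‖u(0)‖²`. -/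
theorem quadratic_lyapunov_function_dissipation
    {X : Type*} [NormedAddCommGroup X] [NormedSpace ℝ X] [CompleteSpace X]
    {U : Type*} [NormedAddCommGroup U] [NormedSpace ℝ U]
    (T : ℝ → X →L[ℝ] X) (hT : IsC0Semigroup T)
    (M lam : ℝ) (hM : 0 < M) (hlam : 0 < lam)
    (hTdecay : ∀ t : ℝ, 0 ≤ t → ‖T t‖ ≤ M * Real.exp (-lam * t))
    (B : U →L[ℝ] X)
    (x : X) (u : ℝ → U) (hu : AdmissibleInput u)
    (hu0 : ContinuousWithinAt u (Ici 0) 0)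
    (ε : ℝ) (hε : 0 < ε) :
    DiniDerivAlong (fun z : X => ∫ t in Ioi (0:ℝ), ‖T t z‖ ^ 2)
        (fun h : ℝ => T h x + ∫ s in (0:ℝ)..h, T (h - s) (B (u s))) x
      ≤ ((-‖x‖ ^ 2 + ε * M ^ 2 / (2 * lam) * ‖x‖ ^ 2
            + M ^ 2 / (2 * lam * ε) * ‖B‖ ^ 2 * ‖u 0‖ ^ 2 : ℝ) : EReal) :=
  quadratic_lyapunov_function_dissipation_general T hT M lam hlam hTdecay B x u hu hu0 ε hε
end

section
/- Let (T_t)_{t≥0} be a strongly continuous semigroup on a Banach space X with ‖T_t‖ ≤ M e^{−λt} for all t ≥ 0 (M, λ > 0), let B : U → X be a bounded linear operator, let 0 < γ < λ, and define V^γ(x) := sup_{s≥0} ‖e^{γs} T_s x‖_X. Then for every x ∈ X and every globally bounded, piecewise continuous input u : [0,∞) → U that is right-continuous at 0, the Dini derivative of V^γ along the mild solution φ(t,x,u) = T_t x + ∫_0^t T_{t−s} B u(s) ds satisfies V̇^γ_u(x) := limsup_{h→0+} (V^γ(φ(h,x,u)) − V^γ(x))/h ≤ −γ V^γ(x) + V^γ(B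 u(0)). -/
open Set Filter Topology MeasureTheory

section Vgam

variable {X : Type*} [NormedAddCommGroup X] [NormedSpace ℝ X] [CompleteSpace X]

/-- The equivalent norm `V^γ(x) := sup_{s ≥ 0} ‖e^{γs} T_s x‖`. -/
noncomputable def Vgam (T : ℝ → X →L[ℝ] X) (γ : ℝ) (x : X) : ℝ :=
  ⨆ s : Ici (0:ℝ), ‖Real.exp (γ * ↑s) • T ↑s x‖

end Vgam

/-! Since `γ < λ`, `V^γ` is a seminorm bounded by `M‖·‖`, and the semigroup law gives
`V^γ(T_h y) ≤ e^{-γh} V^γ(y)`. Writing the mild solution as `T_h x + h B u(0) + E(h)`,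
subadditivity gives `V^γ(φ(h)) ≤ e^{-γh} V^γ(x) + h V^γ(B u(0)) + M‖E(h)‖`. Finally
`E(h) = o(h)`: a bounded semigroup acts jointly continuously, `(t, y) ↦ T_t y`, so by the
right-continuity of `u` at `0` the integrand `T_{h-s} B u(s)` tends to `B u(0)` uniformly in
`s ∈ [0, h]` as `h → 0⁺`. -/

theorem DiniDerivAlong_le_of_tendsto {X : Type*} {V : X → ℝ} {ψ : ℝ → X} {x : X} {g : ℝ → ℝ}
    {L : ℝ} (hle : ∀ᶠ t in 𝓝[>] 0, (V (ψ t) - V x) / t ≤ g t) (hg : Tendsto g (𝓝[>] 0) (𝓝 L)) :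
    DiniDerivAlong V ψ x ≤ L := by
  rw [DiniDerivAlong, ← (EReal.tendsto_coe.2 hg).limsup_eq]
  exact limsup_le_limsup (hle.mono fun t ht => EReal.coe_le_coe ht)

theorem tendsto_exp_neg_mul_sub_one_div (γ : ℝ) :
    Tendsto (fun h => (Real.exp (-γ * h) - 1) / h) (𝓝[>] 0) (𝓝 (-γ)) := by
  have hd : HasDerivAt (fun t => Real.exp (-γ * t)) (-γ) 0 := by
    simpa using ((hasDerivAt_id (0 : ℝ)).const_mul (-γ)).exp
  simpa [div_eq_inv_mul] using hd.tendsto_slope_zero_right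

section General

variable {X : Type*} [NormedAddCommGroup X] [NormedSpace ℝ X]

theorem eventually_forall_Icc_of_nhdsGE {P : ℝ → Prop} (hP : ∀ᶠ r in 𝓝[≥] (0 : ℝ), P r) :
    ∀ᶠ h in 𝓝[>] (0 : ℝ), ∀ r ∈ Icc 0 h, P r := by
  obtain ⟨a, ha, hsub⟩ := mem_nhdsGE_iff_exists_Icc_subset.1 hP
  filter_upwards [Ioo_mem_nhdsGT ha] with h hh r hr
  exact hsub (Icc_subset_Icc_right hh.2.le hr)

theorem tendsto_norm_integral_sub_smul_div [CompleteSpace X] {F : ℝ → ℝ → X} {c : X}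
    (hint : ∀ᶠ h in 𝓝[>] 0, IntervalIntegrable (F h) volume 0 h)
    (hF : ∀ ε > 0, ∀ᶠ h in 𝓝[>] 0, ∀ s ∈ Ioc 0 h, ‖F h s - c‖ < ε) :
    Tendsto (fun h => ‖(∫ s in 0..h, F h s) - h • c‖ / h) (𝓝[>] 0) (𝓝 0) := by
  refine Metric.tendsto_nhds.2 fun ε hε => ?_
  filter_upwards [hint, hF (ε / 2) (half_pos hε), self_mem_nhdsWithin] with h hint hF (hh : 0 < h)
  have hbound : ‖(∫ s in 0..h, F h s) - h • c‖ ≤ ε / 2 * h := by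
    rw [← sub_zero h, ← intervalIntegral.integral_const, sub_zero,
      ← intervalIntegral.integral_sub hint intervalIntegrable_const]
    simpa [abs_of_pos hh] using intervalIntegral.norm_integral_le_of_norm_le_const
      fun s hs => (hF s (uIoc_of_le hh.le ▸ hs)).le
  rw [Real.dist_eq, sub_zero, abs_of_nonneg (by positivity), div_lt_iff₀ hh]
  nlinarith

theorem AdmissibleInput.clm_comp {U : Type*} [NormedAddCommGroup U] [NormedSpace ℝ U]
    {u : ℝ → U} (hu : AdmissibleInput u) (B : U →L[ℝ] X) : AdmissibleInput fun t => B (u t) := by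
  obtain ⟨hpc, C, hC⟩ := hu
  refine ⟨fun a b => (hpc a b).imp fun S hS t ht htS => ?_, ‖B‖ * C, fun t ht => ?_⟩
  · exact B.continuous.continuousAt.comp (hS t ht htS)
  · exact B.le_opNorm_of_le (hC t ht)

end General

section Semigroup

variable {X : Type*} [NormedAddCommGroup X] [NormedSpace ℝ X]
  {T : ℝ → X →L[ℝ] X} {K : ℝ}

theorem norm_le_mul_exp_of_le {M lam γ : ℝ}
    (hdecay : ∀ t, 0 ≤ t → ‖T t‖ ≤ M * Real.exp (-lam * t)) (hγ : γ ≤ lam) (t : ℝ)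
    (ht : 0 ≤ t) : ‖T t‖ ≤ M * Real.exp (-γ * t) := by
  have hM : 0 ≤ M := by simpa using (norm_nonneg _).trans (hdecay 0 le_rfl)
  exact (hdecay t ht).trans (by gcongr)

theorem IsC0Semigroup.continuousOn_uncurry (hT : IsC0Semigroup T)
    (hK : ∀ t, 0 ≤ t → ‖T t‖ ≤ K) :
    ContinuousOn (fun p : ℝ × X => T p.1 p.2) (Ici 0 ×ˢ univ) := by
  rintro ⟨t₀, y₀⟩ ⟨ht₀, -⟩
  rw [ContinuousWithinAt, tendsto_iff_norm_sub_tendsto_zero]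
  have hy : Tendsto (fun p : ℝ × X => K * ‖p.2 - y₀‖) (𝓝[Ici 0 ×ˢ univ] (t₀, y₀)) (𝓝 0) := by
    have hc : Continuous fun p : ℝ × X => K * ‖p.2 - y₀‖ := by fun_prop
    simpa using (hc.tendsto (t₀, y₀)).mono_left nhdsWithin_le_nhds
  have ht : Tendsto (fun p : ℝ × X => ‖T p.1 y₀ - T t₀ y₀‖)
      (𝓝[Ici 0 ×ˢ univ] (t₀, y₀)) (𝓝 0) := by
    rw [nhdsWithin_prod_eq]
    exact tendsto_iff_norm_sub_tendsto_zero.1 ((hT.2.2 y₀ t₀ ht₀).tendsto.comp tendsto_fst)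
  refine squeeze_zero' (.of_forall fun _ => norm_nonneg _) ?_ (by simpa using hy.add ht)
  filter_upwards [self_mem_nhdsWithin] with ⟨t, y⟩ ⟨ht, _⟩
  calc ‖T t y - T t₀ y₀‖ = ‖T t (y - y₀) + (T t y₀ - T t₀ y₀)‖ := by rw [map_sub]; abel_nf
    _ ≤ K * ‖y - y₀‖ + ‖T t y₀ - T t₀ y₀‖ :=
      (norm_add_le _ _).trans (by gcongr; exact (T t).le_of_opNorm_le (hK t ht) _)

theorem IsC0Semigroup.eventually_norm_apply_sub_lt (hT : IsC0Semigroup T)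
    (hK : ∀ t, 0 ≤ t → ‖T t‖ ≤ K) {v : ℝ → X} (hv : ContinuousWithinAt v (Ici 0) 0)
    {ε : ℝ} (hε : 0 < ε) :
    ∀ᶠ h in 𝓝[>] 0, ∀ r ∈ Icc 0 h, ∀ s ∈ Icc 0 h, ‖T r (v s) - v 0‖ < ε := by
  have hcont := hT.continuousOn_uncurry hK (0, v 0) ⟨mem_Ici.2 le_rfl, mem_univ _⟩
  rw [ContinuousWithinAt, nhdsWithin_prod_eq, nhdsWithin_univ] at hcont
  simp only [hT.1, one_apply_eq_self] at hcont
  obtain ⟨P, hP, Q, hQ, hPQ⟩ :=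
    eventually_prod_iff.1 (hcont.eventually (Metric.ball_mem_nhds _ hε))
  filter_upwards [eventually_forall_Icc_of_nhdsGE hP,
    eventually_forall_Icc_of_nhdsGE (hv.eventually hQ)] with h hr hs r hr' s hs'
  simpa [dist_eq_norm] using hPQ (hr r hr') (hs s hs')

theorem IsC0Semigroup.intervalIntegrable_apply_sub (hT : IsC0Semigroup T)
    (hK : ∀ t, 0 ≤ t → ‖T t‖ ≤ K) {v : ℝ → X} (hv : AdmissibleInput v) {h : ℝ} (hh : 0 ≤ h) :
    IntervalIntegrable (fun s => T (h - s) (v s)) volume 0 h := by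
  obtain ⟨S, hS⟩ := hv.1 0 h
  obtain ⟨C, hC⟩ := hv.2
  rw [intervalIntegrable_iff_integrableOn_Icc_of_le hh]
  have hcont : ContinuousOn (fun s => T (h - s) (v s)) (Icc 0 h \ S) := by
    refine (hT.continuousOn_uncurry hK).comp (Continuous.continuousOn (by fun_prop) |>.prodMk
      fun s hs => (hS s hs.1 hs.2).continuousWithinAt) fun s hs => ⟨?_, mem_univ _⟩
    exact sub_nonneg.2 hs.1.2
  have hS0 : (Icc 0 h \ S : Set ℝ) =ᵐ[volume] Icc 0 h :=
    sdiff_null_ae_eq_self (S.finite_toSet.measure_zero volume)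
  refine IntegrableOn.of_bound measure_Icc_lt_top ?_ (K * C) ?_
  · rw [← Measure.restrict_congr_set hS0]
    exact hcont.aestronglyMeasurable (measurableSet_Icc.diff S.finite_toSet.measurableSet)
  · refine ae_restrict_of_forall_mem measurableSet_Icc fun s hs => ?_
    exact (T _).le_of_opNorm_le_of_le (hK _ (sub_nonneg.2 hs.2)) (hC s hs.1)

theorem IsC0Semigroup.tendsto_norm_duhamel_sub_div [CompleteSpace X] (hT : IsC0Semigroup T)
    (hK : ∀ t, 0 ≤ t → ‖T t‖ ≤ K) {v : ℝ → X} (hv : AdmissibleInput v)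
    (hv0 : ContinuousWithinAt v (Ici 0) 0) :
    Tendsto (fun h => ‖(∫ s in 0..h, T (h - s) (v s)) - h • v 0‖ / h) (𝓝[>] 0) (𝓝 0) := by
  refine tendsto_norm_integral_sub_smul_div ?_ fun ε hε => ?_
  · filter_upwards [self_mem_nhdsWithin] with h hh
    exact hT.intervalIntegrable_apply_sub hK hv (le_of_lt hh)
  · filter_upwards [hT.eventually_norm_apply_sub_lt hK hv0 hε] with h hh s hs
    exact hh _ ⟨sub_nonneg.2 hs.2, sub_le_self _ hs.1.le⟩ s (Ioc_subset_Icc_self hs)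

end Semigroup

section Vgam

variable {X : Type*} [NormedAddCommGroup X] [NormedSpace ℝ X]
  {T : ℝ → X →L[ℝ] X} {γ M : ℝ}

theorem norm_exp_smul_apply_le (hTγ : ∀ t, 0 ≤ t → ‖T t‖ ≤ M * Real.exp (-γ * t))
    {s : ℝ} (hs : 0 ≤ s) (y : X) : ‖Real.exp (γ * s) • T s y‖ ≤ M * ‖y‖ := by
  rw [norm_smul, Real.norm_of_nonneg (Real.exp_pos _).le]
  calc Real.exp (γ * s) * ‖T s y‖ ≤ Real.exp (γ * s) * (M * Real.exp (-γ * s) * ‖y‖) := by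
        gcongr; exact (T s).le_of_opNorm_le (hTγ s hs) y
    _ = M * (Real.exp (-γ * s) * Real.exp (γ * s)) * ‖y‖ := by ring
    _ = M * ‖y‖ := by rw [← Real.exp_add]; simp

theorem bddAbove_range_norm_exp_smul_apply
    (hTγ : ∀ t, 0 ≤ t → ‖T t‖ ≤ M * Real.exp (-γ * t)) (y : X) :
    BddAbove (range fun s : Ici (0 : ℝ) => ‖Real.exp (γ * s) • T s y‖) :=
  ⟨M * ‖y‖, forall_mem_range.2 fun s => norm_exp_smul_apply_le hTγ s.2 y⟩

theorem Vgam_le_mul_norm (hTγ : ∀ t, 0 ≤ t → ‖T t‖ ≤ M * Real.exp (-γ * t)) (y : X) :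
    Vgam T γ y ≤ M * ‖y‖ :=
  ciSup_le fun s => norm_exp_smul_apply_le hTγ s.2 y

theorem Vgam_add_le (hTγ : ∀ t, 0 ≤ t → ‖T t‖ ≤ M * Real.exp (-γ * t)) (y z : X) :
    Vgam T γ (y + z) ≤ Vgam T γ y + Vgam T γ z :=
  ciSup_le fun s => by
    rw [map_add, smul_add]
    exact (norm_add_le _ _).trans (add_le_add
      (le_ciSup (bddAbove_range_norm_exp_smul_apply hTγ y) s)
      (le_ciSup (bddAbove_range_norm_exp_smul_apply hTγ z) s))

theorem Vgam_smul (c : ℝ) (y : X) : Vgam T γ (c • y) = |c| * Vgam T γ y := by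
  simp only [Vgam, Real.mul_iSup_of_nonneg (abs_nonneg c), map_smul, smul_comm _ c, norm_smul,
    Real.norm_eq_abs]

theorem Vgam_apply_le (hT : IsC0Semigroup T)
    (hTγ : ∀ t, 0 ≤ t → ‖T t‖ ≤ M * Real.exp (-γ * t))
    {h : ℝ} (hh : 0 ≤ h) (y : X) : Vgam T γ (T h y) ≤ Real.exp (-γ * h) * Vgam T γ y := by
  refine ciSup_le fun ⟨s, (hs : 0 ≤ s)⟩ => ?_
  calc ‖Real.exp (γ * s) • T s (T h y)‖
      = Real.exp (-γ * h) * ‖Real.exp (γ * (s + h)) • T (s + h) y‖ := by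
        rw [hT.2.1 s hs h hh, ContinuousLinearMap.comp_apply, norm_smul, norm_smul,
          Real.norm_of_nonneg (Real.exp_pos _).le, Real.norm_of_nonneg (Real.exp_pos _).le,
          ← mul_assoc, ← Real.exp_add]
        ring_nf
    _ ≤ Real.exp (-γ * h) * Vgam T γ y := by
        gcongr
        exact le_ciSup (bddAbove_range_norm_exp_smul_apply hTγ y) ⟨s + h, add_nonneg hs hh⟩

theorem Vgam_apply_add_le (hT : IsC0Semigroup T)
    (hTγ : ∀ t, 0 ≤ t → ‖T t‖ ≤ M * Real.exp (-γ * t))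
    {h : ℝ} (hh : 0 ≤ h) (x z w : X) :
    Vgam T γ (T h x + z) ≤
      Real.exp (-γ * h) * Vgam T γ x + h * Vgam T γ w + M * ‖z - h • w‖ := by
  calc Vgam T γ (T h x + z) = Vgam T γ (T h x + (h • w + (z - h • w))) := by
        rw [add_sub_cancel]
    _ ≤ Vgam T γ (T h x) + (Vgam T γ (h • w) + Vgam T γ (z - h • w)) :=
        (Vgam_add_le hTγ _ _).trans (add_le_add_right (Vgam_add_le hTγ _ _) _)
    _ ≤ _ := by
        rw [Vgam_smul, abs_of_nonneg hh, ← add_assoc]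
        gcongr
        exacts [Vgam_apply_le hT hTγ hh x, Vgam_le_mul_norm hTγ _]

end Vgam

theorem Vgam_dissipation_general
    {X : Type*} [NormedAddCommGroup X] [NormedSpace ℝ X] [CompleteSpace X]
    {U : Type*} [NormedAddCommGroup U] [NormedSpace ℝ U]
    (T : ℝ → X →L[ℝ] X) (hT : IsC0Semigroup T)
    (M lam : ℝ) (hlam : 0 < lam)
    (hTdecay : ∀ t : ℝ, 0 ≤ t → ‖T t‖ ≤ M * Real.exp (-lam * t))
    (B : U →L[ℝ] X)
    (γ : ℝ) (hγlam : γ < lam)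
    (x : X) (u : ℝ → U) (hu : AdmissibleInput u)
    (hu0 : ContinuousWithinAt u (Ici 0) 0) :
    DiniDerivAlong (Vgam T γ)
        (fun h : ℝ => T h x + ∫ s in (0:ℝ)..h, T (h - s) (B (u s))) x
      ≤ ((-γ * Vgam T γ x + Vgam T γ (B (u 0)) : ℝ) : EReal) := by
  have hTγ := norm_le_mul_exp_of_le hTdecay hγlam.le
  have hTM : ∀ t, 0 ≤ t → ‖T t‖ ≤ M := by simpa using norm_le_mul_exp_of_le hTdecay hlam.le
  set w := B (u 0)
  set E := fun h : ℝ => (∫ s in (0:ℝ)..h, T (h - s) (B (u s))) - h • w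
  have hE : Tendsto (fun h => ‖E h‖ / h) (𝓝[>] 0) (𝓝 0) :=
    hT.tendsto_norm_duhamel_sub_div hTM (hu.clm_comp B)
      (B.continuous.continuousAt.comp_continuousWithinAt hu0)
  refine DiniDerivAlong_le_of_tendsto (g := fun h =>
    (Real.exp (-γ * h) - 1) / h * Vgam T γ x + Vgam T γ w + M * (‖E h‖ / h)) ?_ ?_
  · filter_upwards [self_mem_nhdsWithin] with h (hh : 0 < h)
    have hV := Vgam_apply_add_le hT hTγ hh.le x (∫ s in (0:ℝ)..h, T (h - s) (B (u s))) w
    rw [div_le_iff₀ hh]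
    have : ((Real.exp (-γ * h) - 1) / h * Vgam T γ x + Vgam T γ w + M * (‖E h‖ / h)) * h =
        Real.exp (-γ * h) * Vgam T γ x - Vgam T γ x + h * Vgam T γ w + M * ‖E h‖ := by
      field_simp
    linarith
  · simpa using (((tendsto_exp_neg_mul_sub_one_div γ).mul_const (Vgam T γ x)).add_const
      (Vgam T γ w)).add (hE.const_mul M)

/-- Dissipation inequality for `V^γ(x) = sup_{s≥0} ‖e^{γs}T_s x‖` along
mild solutions of the linear system `ẋ = Ax + Bu`:
`V̇^γ_u(x) ≤ −γ V^γ(x) + V^γ(B u(0))`. -/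
theorem Vgam_dissipation
    {X : Type*} [NormedAddCommGroup X] [NormedSpace ℝ X] [CompleteSpace X]
    {U : Type*} [NormedAddCommGroup U] [NormedSpace ℝ U]
    (T : ℝ → X →L[ℝ] X) (hT : IsC0Semigroup T)
    (M lam : ℝ) (hM : 0 < M) (hlam : 0 < lam)
    (hTdecay : ∀ t : ℝ, 0 ≤ t → ‖T t‖ ≤ M * Real.exp (-lam * t))
    (B : U →L[ℝ] X)
    (γ : ℝ) (hγ : 0 < γ) (hγlam : γ < lam)
    (x : X) (u : ℝ → U) (hu : AdmissibleInput u)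
    (hu0 : ContinuousWithinAt u (Ici 0) 0) :
    DiniDerivAlong (Vgam T γ)
        (fun h : ℝ => T h x + ∫ s in (0:ℝ)..h, T (h - s) (B (u s))) x
      ≤ ((-γ * Vgam T γ x + Vgam T γ (B (u 0)) : ℝ) : EReal) :=
  Vgam_dissipation_general T hT M lam hlam hTdecay B γ hγlam x u hu hu0
end

section
/- Consider the linear system ẋ = Ax + Bu on a Banach space X, where A generates the strongly continuous semigroup (T_t)_{t≥0} and B : U → X is a bounded linear operator, with mild solutions φ(t,x,u) = T_t x + ∫_0^t T_{t−s} B u(s) ds. The following statements are equivalent: (i) the system is ISS (there exist β ∈ KL and γ ∈ K with ‖φ(t,x,u)‖_X ≤ β(‖x‖_X, t) + γ(sup_{s≥0}‖u(s)‖_U) for all x ∈ X, all globally bounded piecewise continuous u and all t ≥ 0); (ii) the system is 0-UGAS (there exists β ∈ KL with ‖T_t x‖_X ≤ β(‖x‖_X, t) for all x ∈ X and t ≥ 0); (iii) the semigroup (T_t)_{t≥0} is exponentially stable (there exist M, λ > 0 with ‖T_t‖ ≤ M e^{−λt} for all t ≥ 0). -/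
open Set Filter Topology MeasureTheory

/-!
Exponential stability gives ISS by estimating the variation-of-constants integral with
`∫₀ᵗ e^{-λ(t-s)} ds ≤ 1/λ`, and ISS gives 0-UGAS by taking `u = 0`. For 0-UGAS ⟹ exponential
stability, the `KL` bound gives `‖T t‖ ≤ β(1, t)`, so `‖T t‖` is bounded and `‖T t₀‖ ≤ 1/2` for
some `t₀ > 0`; submultiplicativity of `t ↦ ‖T t‖` then yields `‖T t‖ ≤ 2 β(1,0) 2^{-t/t₀}`.
-/

open Real

lemma classK_const_mul {c : ℝ} (hc : 0 < c) : ClassK (fun r => c * r) :=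
  ⟨by fun_prop, fun _ _ _ _ hab => mul_lt_mul_of_pos_left hab hc, mul_zero c⟩

lemma classKL_mul_exp {M lam : ℝ} (hM : 0 < M) (hlam : 0 < lam) :
    ClassKL (fun r t => M * r * exp (-lam * t)) := by
  refine ⟨by fun_prop, fun t _ => ?_, fun r hr => ⟨?_, ?_⟩⟩
  · refine ⟨by fun_prop, fun a _ b _ hab => ?_, by simp⟩
    exact mul_lt_mul_of_pos_right (mul_lt_mul_of_pos_left hab hM) (exp_pos _)
  · intro a _ b _ hab
    exact mul_lt_mul_of_pos_left (exp_lt_exp.2 (by nlinarith)) (by positivity)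
  · have h : Tendsto (fun t : ℝ => -lam * t) atTop atBot :=
      tendsto_id.const_mul_atTop_of_neg (neg_neg_iff_pos.mpr hlam)
    simpa using (tendsto_exp_atBot.comp h).const_mul (M * r)

section ClassKL

variable {β : ℝ → ℝ → ℝ}

lemma ClassKL.pos (hβ : ClassKL β) {r t : ℝ} (hr : 0 < r) (ht : 0 ≤ t) :
    0 < β r t := by
  obtain ⟨-, hmono, hzero⟩ := hβ.2.1 t ht
  simpa [hzero] using hmono self_mem_Ici hr.le hr

lemma ClassKL.apply_le_apply_zero (hβ : ClassKL β) {r t : ℝ} (hr : 0 < r) (ht : 0 ≤ t) :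
    β r t ≤ β r 0 :=
  (hβ.2.2 r hr).1.antitoneOn self_mem_Ici (mem_Ici.mpr ht) ht

lemma ClassKL.exists_lt (hβ : ClassKL β) {r ε : ℝ} (hr : 0 < r) (hε : 0 < ε) :
    ∃ t₀, 0 < t₀ ∧ β r t₀ < ε :=
  (((hβ.2.2 r hr).2.eventually (gt_mem_nhds hε)).and (eventually_gt_atTop 0)).exists.imp
    fun _ h => ⟨h.2, h.1⟩

end ClassKL

lemma half_pow_floor_div_le (t t₀ : ℝ) :
    (1 / 2 : ℝ) ^ ⌊t / t₀⌋₊ ≤ 2 * exp (-(log 2 / t₀) * t) := by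
  have hfloor : t / t₀ < ⌊t / t₀⌋₊ + 1 := Nat.lt_floor_add_one _
  have hlog2 : 0 < log 2 := log_pos one_lt_two
  calc (1 / 2 : ℝ) ^ ⌊t / t₀⌋₊ = exp (-(⌊t / t₀⌋₊ * log 2)) := by
        rw [← exp_log (by positivity : (0:ℝ) < (1 / 2) ^ ⌊t / t₀⌋₊), log_pow, one_div, log_inv,
          mul_neg]
    _ ≤ exp (log 2 + -(log 2 / t₀) * t) := by
        refine exp_le_exp.2 ?_
        have : log 2 / t₀ * t = t / t₀ * log 2 := by ring
        nlinarith
    _ = 2 * exp (-(log 2 / t₀) * t) := by rw [exp_add, exp_log two_pos]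

section Submultiplicative

variable {φ : ℝ → ℝ} {C t₀ : ℝ} (hφ : ∀ t, 0 ≤ t → 0 ≤ φ t)
  (hmul : ∀ s, 0 ≤ s → ∀ t, 0 ≤ t → φ (s + t) ≤ φ s * φ t)
  (hC : ∀ t, 0 ≤ t → φ t ≤ C) (ht₀ : 0 < t₀) (hhalf : φ t₀ ≤ 1 / 2)
include hφ hmul hC ht₀ hhalf

lemma le_mul_half_pow_of_submultiplicative (n : ℕ) {r : ℝ} (hr : 0 ≤ r) :
    φ (r + n * t₀) ≤ C * (1 / 2) ^ n := by
  induction n with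
  | zero => simpa using hC r hr
  | succ n ih =>
    have hrn : 0 ≤ r + n * t₀ := by positivity
    calc φ (r + (n + 1 : ℕ) * t₀) = φ (t₀ + (r + n * t₀)) := by push_cast; ring_nf
      _ ≤ φ t₀ * φ (r + n * t₀) := hmul _ ht₀.le _ hrn
      _ ≤ 1 / 2 * (C * (1 / 2) ^ n) := mul_le_mul hhalf ih (hφ _ hrn) (by norm_num)
      _ = C * (1 / 2) ^ (n + 1) := by ring

lemma le_mul_exp_of_submultiplicative {t : ℝ} (ht : 0 ≤ t) :
    φ t ≤ 2 * C * exp (-(log 2 / t₀) * t) := by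
  set n := ⌊t / t₀⌋₊
  have hr : 0 ≤ t - n * t₀ := by
    have := (le_div_iff₀ ht₀).mp (Nat.floor_le (div_nonneg ht ht₀.le))
    linarith
  have hC0 : 0 ≤ C := (hφ 0 le_rfl).trans (hC 0 le_rfl)
  calc φ t = φ (t - n * t₀ + n * t₀) := by ring_nf
    _ ≤ C * (1 / 2) ^ n := le_mul_half_pow_of_submultiplicative hφ hmul hC ht₀ hhalf n hr
    _ ≤ C * (2 * exp (-(log 2 / t₀) * t)) :=
        mul_le_mul_of_nonneg_left (half_pow_floor_div_le t t₀) hC0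
    _ = 2 * C * exp (-(log 2 / t₀) * t) := by ring

end Submultiplicative

lemma integral_exp_neg_mul_sub_le {lam : ℝ} (hlam : 0 < lam) (t : ℝ) :
    ∫ s in (0:ℝ)..t, exp (-lam * (t - s)) ≤ 1 / lam := by
  have hform : (fun s => exp (-lam * (t - s))) = fun s => exp (lam * s - lam * t) := by
    ext s; ring_nf
  rw [hform, intervalIntegral.integral_comp_mul_sub (fun x => exp x) hlam.ne', integral_exp,
    smul_eq_mul, mul_zero, zero_sub, sub_self, exp_zero, one_div]
  exact mul_le_of_le_one_right (inv_nonneg.2 hlam.le) (by linarith [exp_pos (-(lam * t))])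

lemma norm_le_supNorm {U : Type*} [NormedAddCommGroup U] {u : ℝ → U} {C : ℝ}
    (hC : ∀ s, 0 ≤ s → ‖u s‖ ≤ C) {s : ℝ} (hs : 0 ≤ s) : ‖u s‖ ≤ supNorm u :=
  le_ciSup (f := fun s : Ici (0:ℝ) => ‖u s‖) ⟨C, by rintro _ ⟨s, rfl⟩; exact hC s s.2⟩ ⟨s, hs⟩

lemma supNorm_zero {U : Type*} [NormedAddCommGroup U] : supNorm (fun _ : ℝ => (0 : U)) = 0 := by
  simp [supNorm]

section Semigroup

variable {X : Type*} [NormedAddCommGroup X] [NormedSpace ℝ X]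

def IsZeroUGAS (T : ℝ → X →L[ℝ] X) : Prop :=
  ∃ β : ℝ → ℝ → ℝ, ClassKL β ∧ ∀ (x : X) (t : ℝ), 0 ≤ t → ‖T t x‖ ≤ β ‖x‖ t

def IsExpStable (T : ℝ → X →L[ℝ] X) : Prop :=
  ∃ M lam : ℝ, 0 < M ∧ 0 < lam ∧ ∀ t : ℝ, 0 ≤ t → ‖T t‖ ≤ M * exp (-lam * t)

def IsISS {U : Type*} [NormedAddCommGroup U] [NormedSpace ℝ U] (T : ℝ → X →L[ℝ] X)
    (B : U →L[ℝ] X) : Prop :=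
  ∃ (β : ℝ → ℝ → ℝ) (γ : ℝ → ℝ), ClassKL β ∧ ClassK γ ∧
    ∀ (x : X) (u : ℝ → U), AdmissibleInput u → ∀ t : ℝ, 0 ≤ t →
      ‖T t x + ∫ s in (0:ℝ)..t, T (t - s) (B (u s))‖ ≤ β ‖x‖ t + γ (supNorm u)

variable {T : ℝ → X →L[ℝ] X}

lemma norm_apply_le_mul_exp {M lam : ℝ}
    (hexp : ∀ t : ℝ, 0 ≤ t → ‖T t‖ ≤ M * exp (-lam * t)) (x : X) {t : ℝ} (ht : 0 ≤ t) :
    ‖T t x‖ ≤ M * ‖x‖ * exp (-lam * t) :=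
  calc ‖T t x‖ ≤ ‖T t‖ * ‖x‖ := (T t).le_opNorm x
    _ ≤ M * exp (-lam * t) * ‖x‖ := mul_le_mul_of_nonneg_right (hexp t ht) (norm_nonneg x)
    _ = M * ‖x‖ * exp (-lam * t) := by ring

lemma IsExpStable.isZeroUGAS (h : IsExpStable T) : IsZeroUGAS T := by
  obtain ⟨M, lam, hM, hlam, hexp⟩ := h
  exact ⟨_, classKL_mul_exp hM hlam, fun x _ ht => norm_apply_le_mul_exp hexp x ht⟩

lemma norm_integral_semigroup_le {M lam c : ℝ} (hlam : 0 < lam)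
    (hexp : ∀ t : ℝ, 0 ≤ t → ‖T t‖ ≤ M * exp (-lam * t)) {v : ℝ → X}
    (hv : ∀ s, 0 ≤ s → ‖v s‖ ≤ c) {t : ℝ} (ht : 0 ≤ t) :
    ‖∫ s in (0:ℝ)..t, T (t - s) (v s)‖ ≤ M * c / lam := by
  have hc : 0 ≤ c := (norm_nonneg _).trans (hv 0 le_rfl)
  have hM : 0 ≤ M := by
    have := (norm_nonneg _).trans (hexp 0 le_rfl)
    simpa using this
  have hpointwise : ∀ s ∈ Ioc 0 t, ‖T (t - s) (v s)‖ ≤ M * c * exp (-lam * (t - s)) := by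
    rintro s ⟨hs0, hst⟩
    calc ‖T (t - s) (v s)‖ ≤ M * ‖v s‖ * exp (-lam * (t - s)) :=
          norm_apply_le_mul_exp hexp _ (sub_nonneg.2 hst)
      _ ≤ M * c * exp (-lam * (t - s)) := by gcongr; exact hv s hs0.le
  calc ‖∫ s in (0:ℝ)..t, T (t - s) (v s)‖
      ≤ ∫ s in (0:ℝ)..t, M * c * exp (-lam * (t - s)) :=
        intervalIntegral.norm_integral_le_of_norm_le ht (.of_forall hpointwise)
          (Continuous.intervalIntegrable (by fun_prop) _ _)
    _ = M * c * ∫ s in (0:ℝ)..t, exp (-lam * (t - s)) := intervalIntegral.integral_const_mul ..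
    _ ≤ M * c * (1 / lam) := by gcongr; exact integral_exp_neg_mul_sub_le hlam t
    _ = M * c / lam := by ring

lemma IsExpStable.isISS {U : Type*} [NormedAddCommGroup U] [NormedSpace ℝ U]
    (h : IsExpStable T) (B : U →L[ℝ] X) : IsISS T B := by
  obtain ⟨M, lam, hM, hlam, hexp⟩ := h
  refine ⟨_, fun r => M * (‖B‖ + 1) / lam * r, classKL_mul_exp hM hlam,
    classK_const_mul (by positivity), fun x u ⟨_, C, hC⟩ t ht => ?_⟩
  have hBu : ∀ s, 0 ≤ s → ‖B (u s)‖ ≤ ‖B‖ * supNorm u := fun s hs =>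
    (B.le_opNorm _).trans (mul_le_mul_of_nonneg_left (norm_le_supNorm hC hs) (norm_nonneg B))
  have hsup : 0 ≤ supNorm u := (norm_nonneg _).trans (norm_le_supNorm hC le_rfl)
  calc ‖T t x + ∫ s in (0:ℝ)..t, T (t - s) (B (u s))‖
      ≤ ‖T t x‖ + ‖∫ s in (0:ℝ)..t, T (t - s) (B (u s))‖ := norm_add_le _ _
    _ ≤ M * ‖x‖ * exp (-lam * t) + M * (‖B‖ * supNorm u) / lam :=
        add_le_add (norm_apply_le_mul_exp hexp x ht) (norm_integral_semigroup_le hlam hexp hBu ht)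
    _ ≤ M * ‖x‖ * exp (-lam * t) + M * (‖B‖ + 1) / lam * supNorm u := by
        rw [mul_div_right_comm, mul_div_right_comm M, mul_assoc, mul_assoc]
        gcongr
        linarith

lemma IsISS.isZeroUGAS {U : Type*} [NormedAddCommGroup U] [NormedSpace ℝ U] {B : U →L[ℝ] X}
    (h : IsISS T B) : IsZeroUGAS T := by
  obtain ⟨β, γ, hβ, hγ, hiss⟩ := h
  refine ⟨β, hβ, fun x t ht => ?_⟩
  have hzero : AdmissibleInput (fun _ : ℝ => (0 : U)) :=
    ⟨fun _ _ => ⟨∅, fun _ _ _ => continuousAt_const⟩, 0, fun _ _ => by simp⟩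
  simpa [supNorm_zero, hγ.2.2] using hiss x _ hzero t ht

lemma opNorm_le_of_classKL {β : ℝ → ℝ → ℝ} (hβ : ClassKL β)
    (h : ∀ (x : X) (t : ℝ), 0 ≤ t → ‖T t x‖ ≤ β ‖x‖ t) {t : ℝ} (ht : 0 ≤ t) :
    ‖T t‖ ≤ β 1 t :=
  ContinuousLinearMap.opNorm_le_of_unit_norm (hβ.pos one_pos ht).le fun x hx => hx ▸ h x t ht

lemma IsZeroUGAS.isExpStable
    (hmul : ∀ s : ℝ, 0 ≤ s → ∀ t : ℝ, 0 ≤ t → T (s + t) = (T s).comp (T t))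
    (h : IsZeroUGAS T) : IsExpStable T := by
  obtain ⟨β, hβ, hbound⟩ := h
  obtain ⟨t₀, ht₀, hhalf⟩ := hβ.exists_lt one_pos (by norm_num : (0 : ℝ) < 1 / 2)
  have hsubmul : ∀ s, 0 ≤ s → ∀ t, 0 ≤ t → ‖T (s + t)‖ ≤ ‖T s‖ * ‖T t‖ := fun s hs t ht =>
    (hmul s hs t ht).symm ▸ ContinuousLinearMap.opNorm_comp_le _ _
  have hbounded : ∀ t, 0 ≤ t → ‖T t‖ ≤ β 1 0 := fun t ht =>
    (opNorm_le_of_classKL hβ hbound ht).trans (hβ.apply_le_apply_zero one_pos ht)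
  have hcontract : ‖T t₀‖ ≤ 1 / 2 := (opNorm_le_of_classKL hβ hbound ht₀.le).trans hhalf.le
  exact ⟨2 * β 1 0, log 2 / t₀, by linarith [hβ.pos one_pos le_rfl],
    div_pos (log_pos one_lt_two) ht₀, fun t ht => le_mul_exp_of_submultiplicative
      (φ := fun t => ‖T t‖) (fun _ _ => norm_nonneg _) hsubmul hbounded ht₀ hcontract ht⟩

end Semigroup

theorem linear_iss_characterization_general
    {X : Type*} [NormedAddCommGroup X] [NormedSpace ℝ X]
    {U : Type*} [NormedAddCommGroup U] [NormedSpace ℝ U]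
    (T : ℝ → X →L[ℝ] X) (hT : IsC0Semigroup T)
    (B : U →L[ℝ] X) :
    -- (i) ISS ↔ (ii) 0-UGAS
    ((∃ (β : ℝ → ℝ → ℝ) (γ : ℝ → ℝ), ClassKL β ∧ ClassK γ ∧
        ∀ (x : X) (u : ℝ → U), AdmissibleInput u → ∀ t : ℝ, 0 ≤ t →
          ‖T t x + ∫ s in (0:ℝ)..t, T (t - s) (B (u s))‖ ≤ β ‖x‖ t + γ (supNorm u))
      ↔
      (∃ β : ℝ → ℝ → ℝ, ClassKL β ∧ ∀ (x : X) (t : ℝ), 0 ≤ t → ‖T t x‖ ≤ β ‖x‖ t))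
    ∧
    -- (ii) 0-UGAS ↔ (iii) exponential stability
    ((∃ β : ℝ → ℝ → ℝ, ClassKL β ∧ ∀ (x : X) (t : ℝ), 0 ≤ t → ‖T t x‖ ≤ β ‖x‖ t)
      ↔
      (∃ M lam : ℝ, 0 < M ∧ 0 < lam ∧ ∀ t : ℝ, 0 ≤ t →
        ‖T t‖ ≤ M * Real.exp (-lam * t))) := by
  have hexp : IsZeroUGAS T → IsExpStable T := IsZeroUGAS.isExpStable hT.2.1
  change (IsISS T B ↔ IsZeroUGAS T) ∧ (IsZeroUGAS T ↔ IsExpStable T)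
  exact ⟨⟨IsISS.isZeroUGAS, fun h => (hexp h).isISS B⟩, ⟨hexp, IsExpStable.isZeroUGAS⟩⟩

/-- For the linear system `ẋ = Ax + Bu` with bounded input operator `B`,
the following are equivalent: (i) ISS, (ii) 0-UGAS, (iii) exponential stability of the
semigroup. -/
theorem linear_iss_characterization
    {X : Type*} [NormedAddCommGroup X] [NormedSpace ℝ X] [CompleteSpace X]
    {U : Type*} [NormedAddCommGroup U] [NormedSpace ℝ U]
    (T : ℝ → X →L[ℝ] X) (hT : IsC0Semigroup T)
    (B : U →L[ℝ] X) :
    -- (i) ISS ↔ (ii) 0-UGAS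
    ((∃ (β : ℝ → ℝ → ℝ) (γ : ℝ → ℝ), ClassKL β ∧ ClassK γ ∧
        ∀ (x : X) (u : ℝ → U), AdmissibleInput u → ∀ t : ℝ, 0 ≤ t →
          ‖T t x + ∫ s in (0:ℝ)..t, T (t - s) (B (u s))‖ ≤ β ‖x‖ t + γ (supNorm u))
      ↔
      (∃ β : ℝ → ℝ → ℝ, ClassKL β ∧ ∀ (x : X) (t : ℝ), 0 ≤ t → ‖T t x‖ ≤ β ‖x‖ t))
    ∧
    -- (ii) 0-UGAS ↔ (iii) exponential stability
    ((∃ β : ℝ → ℝ → ℝ, ClassKL β ∧ ∀ (x : X) (t : ℝ), 0 ≤ t → ‖T t x‖ ≤ β ‖x‖ t)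
      ↔
      (∃ M lam : ℝ, 0 < M ∧ 0 < lam ∧ ∀ t : ℝ, 0 ≤ t →
        ‖T t‖ ≤ M * Real.exp (-lam * t))) :=
  linear_iss_characterization_general T hT B
end
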